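/- arXiv:1510.06055 — 2 statements merged into one kernel-verified Lean document; each statement's English description precedes it below -/
import Mathlib

section
/- For any improvement bag A (i.e., a bag A for which there exists v ∈ A with γ(A \ {v}) < γ(A)), the cut satisfies c(A) ≥ γ(A) − Δ (equivalently, c(A) + Δ ≥ γ(A)). -/
open Finset

variable {V : Type*} [Fintype V] [DecidableEq V]

/-- The cut of a bag `A`: the number of edges of `G` with exactly one endpoint in `A`. -/
def cut (G : SimpleGraph V) [DecidableRel G.Adj] (A : Finset V) : ℕ :=
  ((A ×ˢ Aᶜ).filter fun p => G.Adj p.1 p.2).card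

/-- An `(A–B)`-crusade of length `k+1`: a sequence of bags starting at `A`, ending at `B`,
removing at most one node at each step. -/
def IsCrusade (A B : Finset V) (k : ℕ) (ω : ℕ → Finset V) : Prop :=
  ω 0 = A ∧ ω k = B ∧ ∀ i < k, (ω i \ ω (i + 1)).card ≤ 1

/-- The width of a crusade: the maximum cut encountered after the first bag. -/
def width (G : SimpleGraph V) [DecidableRel G.Adj] (k : ℕ) (ω : ℕ → Finset V) : ℕ :=
  (Finset.Icc 1 k).sup fun i => cut G (ω i)

/-- The resilience of a bag `A`: the minimum width over all `(A–∅)`-crusades. -/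
noncomputable def resilience (G : SimpleGraph V) [DecidableRel G.Adj] (A : Finset V) : ℕ :=
  sInf {w | ∃ (k : ℕ) (ω : ℕ → Finset V), IsCrusade A ∅ k ω ∧ width G k ω = w}

/-- A crusade is monotone if each bag contains the next. -/
def IsMonotone (k : ℕ) (ω : ℕ → Finset V) : Prop :=
  ∀ i < k, ω (i + 1) ⊆ ω i

/-- The CutWidth of `G`: the minimum width over all monotone `(V–∅)`-crusades. -/
noncomputable def cutWidth (G : SimpleGraph V) [DecidableRel G.Adj] : ℕ :=
  sInf {w | ∃ (k : ℕ) (ω : ℕ → Finset V),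
    IsCrusade Finset.univ ∅ k ω ∧ IsMonotone k ω ∧ width G k ω = w}

/-! An improvement bag `A` loses resilience on removing some `v ∈ A`, so the crusade that steps
to `A.erase v` and then follows an optimal crusade of `A.erase v` has width at most
`max (c(A.erase v)) (γ(A.erase v))`; as this bounds `γ(A) > γ(A.erase v)`, the maximum is the
cut, and removing `v` adds at most `deg v ≤ Δ` to the cut. -/

def prependBag (A : Finset V) (ω : ℕ → Finset V) : ℕ → Finset V
  | 0 => A
  | j + 1 => ω j

omit [Fintype V] in
theorem IsCrusade.prependBag {A B C : Finset V} {k : ℕ} {ω : ℕ → Finset V}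
    (h : IsCrusade B C k ω) (hAB : (A \ B).card ≤ 1) :
    IsCrusade A C (k + 1) (prependBag A ω) := by
  obtain ⟨h0, hk, hstep⟩ := h
  refine ⟨rfl, hk, ?_⟩
  rintro (_ | i) hi
  · show (A \ ω 0).card ≤ 1
    rwa [h0]
  · exact hstep i (by omega)

omit [Fintype V] in
theorem exists_isCrusade_empty (A : Finset V) : ∃ k ω, IsCrusade A ∅ k ω := by
  induction A using Finset.strongInduction with
  | H A ih =>
    rcases A.eq_empty_or_nonempty with rfl | ⟨v, hv⟩
    · exact ⟨0, fun _ => ∅, rfl, rfl, by omega⟩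
    · obtain ⟨k, ω, hω⟩ := ih (A.erase v) (erase_ssubset hv)
      exact ⟨k + 1, _, hω.prependBag (by simp [sdiff_erase_self hv])⟩

section Resilience

variable (G : SimpleGraph V) [DecidableRel G.Adj]

theorem width_prependBag_le {A : Finset V} {k : ℕ} {ω : ℕ → Finset V} :
    width G (k + 1) (prependBag A ω) ≤ max (cut G (ω 0)) (width G k ω) := by
  refine Finset.sup_le fun i hi => ?_
  obtain ⟨hi1, hik⟩ := mem_Icc.mp hi
  obtain ⟨_ | j, rfl⟩ := Nat.exists_eq_add_of_le' hi1
  · exact le_max_left _ _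
  · exact le_max_of_le_right <|
      le_sup (f := fun i => cut G (ω i)) (mem_Icc.mpr ⟨by omega, by omega⟩)

theorem resilience_le_width {A : Finset V} {k : ℕ} {ω : ℕ → Finset V}
    (h : IsCrusade A ∅ k ω) : resilience G A ≤ width G k ω :=
  Nat.sInf_le ⟨k, ω, h, rfl⟩

theorem exists_isCrusade_width_eq_resilience (A : Finset V) :
    ∃ k ω, IsCrusade A ∅ k ω ∧ width G k ω = resilience G A := by
  obtain ⟨k, ω, h⟩ := exists_isCrusade_empty A
  exact Nat.sInf_mem (s := {w | ∃ k ω, IsCrusade A ∅ k ω ∧ width G k ω = w})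
    ⟨width G k ω, k, ω, h, rfl⟩

theorem resilience_le_max_cut_resilience {A B : Finset V} (hAB : (A \ B).card ≤ 1) :
    resilience G A ≤ max (cut G B) (resilience G B) := by
  obtain ⟨k, ω, hω, hwidth⟩ := exists_isCrusade_width_eq_resilience G B
  calc resilience G A ≤ width G (k + 1) (prependBag A ω) :=
        resilience_le_width G (hω.prependBag hAB)
    _ ≤ max (cut G (ω 0)) (width G k ω) := width_prependBag_le G
    _ = max (cut G B) (resilience G B) := by rw [hω.1, hwidth]

theorem cut_erase_le (A : Finset V) (v : V) :
    cut G (A.erase v) ≤ cut G A + G.degree v := by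
  have hsub : (((A.erase v) ×ˢ (A.erase v)ᶜ).filter fun p => G.Adj p.1 p.2) ⊆
      ((A ×ˢ Aᶜ).filter fun p => G.Adj p.1 p.2) ∪ (G.neighborFinset v).image (·, v) := by
    rintro ⟨x, y⟩ h
    simp only [mem_filter, mem_product, mem_erase, mem_compl, not_and'] at h
    obtain ⟨⟨⟨-, hx⟩, hy⟩, hxy⟩ := h
    by_cases hyv : y = v
    · subst hyv
      exact mem_union_right _ (mem_image.mpr ⟨x, by simpa using hxy.symm, rfl⟩)
    · refine mem_union_left _ (mem_filter.mpr ⟨mem_product.mpr ⟨hx, ?_⟩, hxy⟩)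
      exact mem_compl.mpr fun hyA => hy hyA hyv
  calc cut G (A.erase v) ≤ cut G A + ((G.neighborFinset v).image (·, v)).card :=
        (card_le_card hsub).trans (card_union_le _ _)
    _ ≤ cut G A + G.degree v := by
        rw [← G.card_neighborFinset_eq_degree]
        exact Nat.add_le_add_left card_image_le _

end Resilience

theorem cut_of_improvement_bag_general (G : SimpleGraph V) [DecidableRel G.Adj]
    (A : Finset V)
    (himp : ∃ v ∈ A, resilience G (A.erase v) < resilience G A) :
    resilience G A ≤ cut G A + G.maxDegree := by
  obtain ⟨v, hv, hlt⟩ := himp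
  have hstep : resilience G A ≤ max (cut G (A.erase v)) (resilience G (A.erase v)) :=
    resilience_le_max_cut_resilience G (by simp [sdiff_erase_self hv])
  have hcut : resilience G A ≤ cut G (A.erase v) :=
    (le_max_iff.mp hstep).resolve_right hlt.not_ge
  calc resilience G A ≤ cut G A + G.degree v := hcut.trans (cut_erase_le G A v)
    _ ≤ cut G A + G.maxDegree := Nat.add_le_add_left (G.degree_le_maxDegree v) _

theorem cut_of_improvement_bag (G : SimpleGraph V) [DecidableRel G.Adj]
    (hconn : G.Connected) (hΔ : 0 < G.maxDegree) (A : Finset V)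
    (himp : ∃ v ∈ A, resilience G (A.erase v) < resilience G A) :
    resilience G A ≤ cut G A + G.maxDegree :=
  cut_of_improvement_bag_general G A himp
end

section
/- Suppose the CutWidth W of the graph satisfies W ≥ Δ. Then for any bag A with γ(A) < W, one has γ(A) ≥ Δ·(|A| − E), where E = n + 2 − 2W/Δ; equivalently, γ(A) + (n + 2)·Δ ≥ Δ·|A| + 2W. -/
open Finset

variable {V : Type*} [Fintype V] [DecidableEq V]

variable (G : SimpleGraph V) [DecidableRel G.Adj]

lemma cut_empty : cut G (∅ : Finset V) = 0 := by simp [cut]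

lemma cut_le_mul_compl (S : Finset V) : cut G S ≤ G.maxDegree * Sᶜ.card := by
  classical
  have hsub : ((S ×ˢ Sᶜ).filter fun p => G.Adj p.1 p.2)
      ⊆ Sᶜ.biUnion (fun w => (G.neighborFinset w).image fun u => (u, w)) := by
    intro p hp
    simp only [mem_filter, mem_product] at hp
    rcases p with ⟨u, w⟩
    simp only [mem_biUnion, mem_image, SimpleGraph.mem_neighborFinset]
    exact ⟨w, hp.1.2, u, hp.2.symm, rfl⟩
  calc cut G S ≤ _ := Finset.card_le_card hsub
    _ ≤ ∑ w ∈ Sᶜ, ((G.neighborFinset w).image fun u => (u, w)).card :=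
        Finset.card_biUnion_le
    _ ≤ ∑ w ∈ Sᶜ, G.maxDegree := by
        refine Finset.sum_le_sum fun w _ => ?_
        calc ((G.neighborFinset w).image fun u => (u, w)).card
            ≤ (G.neighborFinset w).card := Finset.card_image_le
          _ = G.degree w := (G.card_neighborFinset_eq_degree w)
          _ ≤ G.maxDegree := G.degree_le_maxDegree w
    _ = G.maxDegree * Sᶜ.card := by rw [Finset.sum_const, smul_eq_mul, mul_comm]

lemma cut_insert_le (S : Finset V) (v : V) :
    cut G (insert v S) ≤ cut G S + G.maxDegree := by
  classical
  have hsub : (((insert v S) ×ˢ (insert v S)ᶜ).filter fun p => G.Adj p.1 p.2)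
      ⊆ ((S ×ˢ Sᶜ).filter fun p => G.Adj p.1 p.2) ∪
        ((G.neighborFinset v).image fun w => (v, w)) := by
    intro p hp
    simp only [mem_filter, mem_product, mem_insert, mem_compl] at hp
    rcases p with ⟨u, w⟩
    obtain ⟨⟨hu, hw⟩, hadj⟩ := hp
    simp only [mem_union, mem_filter, mem_product, mem_compl, mem_image,
      SimpleGraph.mem_neighborFinset]
    rcases hu with rfl | hu
    · exact Or.inr ⟨w, hadj, rfl⟩
    · exact Or.inl ⟨⟨hu, fun hws => hw (Or.inr hws)⟩, hadj⟩
  calc cut G (insert v S) ≤ _ := Finset.card_le_card hsub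
    _ ≤ cut G S + ((G.neighborFinset v).image fun w => (v, w)).card :=
        Finset.card_union_le _ _
    _ ≤ cut G S + G.maxDegree := by
        have : ((G.neighborFinset v).image fun w => (v, w)).card ≤ G.degree v := by
          rw [← G.card_neighborFinset_eq_degree]; exact Finset.card_image_le
        exact Nat.add_le_add_left (this.trans (G.degree_le_maxDegree v)) _

lemma cut_submod (X Y : Finset V) :
    cut G (X ∩ Y) + cut G (X ∪ Y) ≤ cut G X + cut G Y := by
  classical
  have hrw : ∀ S : Finset V, cut G S =
      ∑ p ∈ (univ : Finset V) ×ˢ (univ : Finset V),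
        (if p.1 ∈ S ∧ p.2 ∉ S ∧ G.Adj p.1 p.2 then 1 else 0) := by
    intro S
    rw [cut, Finset.card_filter]
    have h1 : ∀ p ∈ S ×ˢ Sᶜ, (if G.Adj p.1 p.2 then 1 else 0) =
        (if p.1 ∈ S ∧ p.2 ∉ S ∧ G.Adj p.1 p.2 then 1 else 0) := by
      intro p hp
      simp only [mem_product, mem_compl] at hp
      simp [hp.1, hp.2]
    rw [Finset.sum_congr rfl h1]
    refine Finset.sum_subset (fun p _ => by simp) ?_
    intro p _ hp
    simp only [mem_product, mem_compl, not_and_or, not_not] at hp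
    rcases hp with h | h <;> simp [h]
  rw [hrw, hrw, hrw, hrw, ← Finset.sum_add_distrib, ← Finset.sum_add_distrib]
  refine Finset.sum_le_sum fun p _ => ?_
  by_cases h1 : p.1 ∈ X <;> by_cases h2 : p.1 ∈ Y <;> by_cases h3 : p.2 ∈ X <;>
    by_cases h4 : p.2 ∈ Y <;> by_cases h5 : G.Adj p.1 p.2 <;>
    simp [h1, h2, h3, h4, h5, Finset.mem_inter, Finset.mem_union]

lemma final (B : Finset V) (g l : ℕ) (τ : ℕ → Finset V)
    (hτ0 : τ 0 = B) (hτl : τ l = ∅)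
    (hmono : ∀ j < l, τ (j + 1) ⊆ τ j)
    (hstep : ∀ j < l, (τ j \ τ (j + 1)).card ≤ 1)
    (hcut : ∀ j ≤ l, cut G (τ j) ≤ g)
    (hg : g < cutWidth G) (hne : Nonempty V) :
    2 * cutWidth G + G.maxDegree * B.card ≤ g + G.maxDegree * Fintype.card V := by
  classical
  set Δ := G.maxDegree with hΔdef
  set n := Fintype.card V with hndef
  set m' := Bᶜ.toList with hm'def
  set m := m'.length with hmdef
  have hnodup : m'.Nodup := Bᶜ.nodup_toList
  have hmcard : m = Bᶜ.card := Bᶜ.length_toList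
  have hmn : B.card + m = n := by rw [hmcard]; exact B.card_add_card_compl
  set σ : ℕ → Finset V := fun t => B ∪ (m'.drop t).toFinset with hσdef
  have hσ0 : σ 0 = Finset.univ := by
    simp only [hσdef, List.drop_zero, hm'def, Finset.toList_toFinset]
    exact Finset.union_compl B
  have hσm : ∀ t, m ≤ t → σ t = B := by
    intro t ht
    simp only [hσdef, List.drop_eq_nil_of_le ht, List.toFinset_nil, Finset.union_empty]
  have hins : ∀ (t : ℕ) (ht : t < m), σ t = insert (m'.get ⟨t, ht⟩) (σ (t + 1)) := by
    intro t ht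
    simp only [hσdef]
    rw [List.drop_eq_getElem_cons ht, List.toFinset_cons]
    rw [Finset.union_insert]
    rfl
  have hσcard : ∀ t, t ≤ m → (σ t)ᶜ.card = t := by
    intro t ht
    have hdisj : Disjoint B (m'.drop t).toFinset := by
      rw [Finset.disjoint_left]
      intro a ha hmem
      have : a ∈ Bᶜ := by
        rw [← Finset.mem_toList, ← hm'def]
        exact (List.mem_of_mem_drop (List.mem_toFinset.mp hmem))
      exact (Finset.mem_compl.mp this) ha
    have hc1 : (m'.drop t).toFinset.card = m - t := by
      rw [List.toFinset_card_of_nodup (hnodup.sublist (List.drop_sublist t m'))]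
      simp [hmdef]
    have hc2 : (σ t).card = B.card + (m - t) := by
      rw [hσdef]
      rw [Finset.card_union_of_disjoint hdisj, hc1]
    rw [Finset.card_compl, hc2]
    omega
  have hσcut1 : ∀ t, t ≤ m → cut G (σ t) ≤ Δ * t := by
    intro t ht
    have := cut_le_mul_compl G (σ t)
    rwa [hσcard t ht] at this
  have hσcut2 : ∀ d t, t + d = m → cut G (σ t) ≤ cut G B + Δ * d := by
    intro d
    induction d with
    | zero => intro t ht; rw [hσm t (by omega)]; simp
    | succ d ih =>
        intro t ht
        have ht' : t < m := by omega
        calc cut G (σ t) = cut G (insert (m'.get ⟨t, by omega⟩) (σ (t + 1))) := by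
              rw [← hins t ht']
          _ ≤ cut G (σ (t + 1)) + Δ := cut_insert_le G _ _
          _ ≤ (cut G B + Δ * d) + Δ := by
              have := ih (t + 1) (by omega)
              omega
          _ = cut G B + Δ * (d + 1) := by ring
  set K := m + l with hKdef
  set χ : ℕ → Finset V := fun t => if t < m then σ t else τ (t - m) with hχdef
  have hχm : ∀ t, t ≤ m → χ t = σ t := by
    intro t ht
    by_cases h : t < m
    · simp [hχdef, h]
    · have : t = m := by omega
      subst this
      simp only [hχdef, lt_irrefl, if_false, Nat.sub_self]
      rw [hτ0, hσm m le_rfl]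
  have hχτ : ∀ t, m ≤ t → χ t = τ (t - m) := by
    intro t ht
    simp [hχdef, Nat.not_lt.mpr ht]
  have hcrusade : IsCrusade Finset.univ ∅ K χ := by
    refine ⟨by rw [hχm 0 (Nat.zero_le m), hσ0], ?_, ?_⟩
    · rw [hχτ K (by omega)]
      have : K - m = l := by omega
      rw [this, hτl]
    · intro t htK
      by_cases h : t + 1 ≤ m
      · rw [hχm t (by omega), hχm (t + 1) h]
        have ht : t < m := by omega
        rw [hins t ht]
        have hsub : insert (m'.get ⟨t, by omega⟩) (σ (t + 1)) \ σ (t + 1) ⊆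
            {m'.get ⟨t, by omega⟩} := by
          intro y hy
          rw [Finset.mem_sdiff, Finset.mem_insert] at hy
          rcases hy.1 with rfl | hmem
          · exact Finset.mem_singleton_self _
          · exact absurd hmem hy.2
        calc _ ≤ ({m'.get ⟨t, by omega⟩} : Finset V).card := Finset.card_le_card hsub
          _ = 1 := Finset.card_singleton _
      · have hm : m ≤ t := by omega
        rw [hχτ t hm, hχτ (t + 1) (by omega)]
        have : t + 1 - m = (t - m) + 1 := by omega
        rw [this]
        exact hstep (t - m) (by omega)
  have hmonoχ : IsMonotone K χ := by
    intro t htK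
    by_cases h : t + 1 ≤ m
    · rw [hχm t (by omega), hχm (t + 1) h]
      rw [hins t (by omega)]
      exact Finset.subset_insert _ _
    · have hm : m ≤ t := by omega
      rw [hχτ t hm, hχτ (t + 1) (by omega)]
      have : t + 1 - m = (t - m) + 1 := by omega
      rw [this]
      exact hmono (t - m) (by omega)
  have hWle : cutWidth G ≤ width G K χ :=
    Nat.sInf_le ⟨K, χ, hcrusade, hmonoχ, rfl⟩
  have hK1 : 1 ≤ K := by
    by_contra h
    have hm0 : m = 0 := by omega
    have hl0 : l = 0 := by omega
    have h1 : B = Finset.univ := by rw [← hσm 0 (by omega), hσ0]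
    have h2 : B = ∅ := by rw [← hτ0, ← hl0, hτl]
    have : (Finset.univ : Finset V).Nonempty := Finset.univ_nonempty
    rw [← h1, h2] at this
    exact Finset.not_nonempty_empty this
  obtain ⟨t₀, ht₀mem, ht₀⟩ :=
    Finset.exists_mem_eq_sup (Finset.Icc 1 K) ⟨1, Finset.mem_Icc.mpr ⟨le_rfl, hK1⟩⟩
      fun i => cut G (χ i)
  rw [Finset.mem_Icc] at ht₀mem
  have hwidtheq : width G K χ = cut G (χ t₀) := ht₀
  have hkey : 2 * cut G (χ t₀) ≤ max (2 * g) (cut G B + Δ * m) := by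
    by_cases h : t₀ < m
    · rw [hχm t₀ (by omega)]
      have h1 := hσcut1 t₀ (by omega)
      have h2 := hσcut2 (m - t₀) t₀ (by omega)
      have h3 : Δ * t₀ + Δ * (m - t₀) = Δ * m := by
        rw [← Nat.mul_add]
        congr 1
        omega
      have : 2 * cut G (σ t₀) ≤ cut G B + Δ * m := by omega
      exact le_max_of_le_right this
    · rw [hχτ t₀ (by omega)]
      have := hcut (t₀ - m) (by omega)
      exact le_max_of_le_left (by omega)
  rw [← hwidtheq] at hkey
  have h2W : 2 * cutWidth G ≤ max (2 * g) (cut G B + Δ * m) := by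
    calc 2 * cutWidth G ≤ 2 * width G K χ := by omega
      _ ≤ _ := hkey
  rcases Nat.le_total (max (2 * g) (cut G B + Δ * m)) (2 * g) with hmax | _
  · exfalso
    have : cutWidth G ≤ g := by omega
    omega
  · have hmax2 : 2 * cutWidth G ≤ cut G B + Δ * m := by
      rcases max_cases (2 * g) (cut G B + Δ * m) with ⟨heq, _⟩ | ⟨heq, _⟩
      · rw [heq] at h2W
        have : cutWidth G ≤ g := by omega
        omega
      · rw [heq] at h2W
        exact h2W
    have hcB : cut G B ≤ g := by rw [← hτ0]; exact hcut 0 (Nat.zero_le l)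
    have : Δ * m + Δ * B.card = Δ * n := by rw [← Nat.mul_add]; congr 1; omega
    omega
lemma peel_crusade (S : Finset V) :
    ∃ ω : ℕ → Finset V, IsCrusade S ∅ S.card ω := by
  classical
  set l := S.toList with hldef
  have hnodup : l.Nodup := S.nodup_toList
  have hlen : l.length = S.card := S.length_toList
  refine ⟨fun t => (l.drop t).toFinset, ?_, ?_, ?_⟩
  · simp [hldef]
  · show (l.drop S.card).toFinset = ∅
    rw [List.drop_eq_nil_of_le (by omega)]
    simp
  · intro t ht
    have htl : t < l.length := by omega
    show ((l.drop t).toFinset \ (l.drop (t + 1)).toFinset).card ≤ 1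
    rw [List.drop_eq_getElem_cons htl, List.toFinset_cons]
    have hsub : insert l[t] (l.drop (t + 1)).toFinset \ (l.drop (t + 1)).toFinset ⊆
        {l[t]} := by
      intro y hy
      rw [Finset.mem_sdiff, Finset.mem_insert] at hy
      rcases hy.1 with rfl | hmem
      · exact Finset.mem_singleton_self _
      · exact absurd hmem hy.2
    calc _ ≤ ({l[t]} : Finset V).card := Finset.card_le_card hsub
      _ = 1 := Finset.card_singleton _

lemma resilience_set_nonempty (A : Finset V) :
    {w | ∃ (k : ℕ) (ω : ℕ → Finset V), IsCrusade A ∅ k ω ∧ width G k ω = w}.Nonempty := by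
  obtain ⟨ω, hω⟩ := peel_crusade A
  exact ⟨width G A.card ω, A.card, ω, hω, rfl⟩

lemma exists_tail_monotone (A : Finset V) :
    ∃ (k : ℕ) (ω : ℕ → Finset V), IsCrusade A ∅ k ω ∧ width G k ω ≤ resilience G A ∧
      ∀ i, 1 ≤ i → i < k → ω (i + 1) ⊆ ω i := by
  classical
  set n := Fintype.card V with hndef
  set γ := resilience G A with hγdef
  set Φ : ℕ → (ℕ → Finset V) → ℕ :=
    fun k ω => ∑ i ∈ Finset.Icc 1 k, ((n + 1) * cut G (ω i) + (ω i).card) with hΦdef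
  set T : Set ℕ := {v | ∃ (k : ℕ) (ω : ℕ → Finset V),
    IsCrusade A ∅ k ω ∧ width G k ω ≤ γ ∧ Φ k ω = v} with hTdef
  have hTne : T.Nonempty := by
    obtain ⟨k, ω, hcr, hwid⟩ := Nat.sInf_mem (resilience_set_nonempty G A)
    exact ⟨Φ k ω, k, ω, hcr, le_of_eq hwid, rfl⟩
  obtain ⟨k, ω, hcr, hw, hΦeq⟩ := Nat.sInf_mem hTne
  refine ⟨k, ω, hcr, hw, ?_⟩
  by_contra hcon
  push_neg at hcon
  obtain ⟨i, hi1, hik, hnsub⟩ := hcon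
  obtain ⟨x, hx1, hx2⟩ := Finset.not_subset.mp hnsub
  have hik1 : i + 1 < k := by
    rcases Nat.lt_or_ge (i + 1) k with h | h
    · exact h
    · exfalso
      have : i + 1 = k := by omega
      rw [this, hcr.2.1] at hnsub
      exact hnsub (Finset.empty_subset _)
  have hcuts : ∀ j, 1 ≤ j → j ≤ k → cut G (ω j) ≤ γ := fun j h1 h2 =>
    le_trans (Finset.le_sup (f := fun i => cut G (ω i)) (Finset.mem_Icc.mpr ⟨h1, h2⟩)) hw
  by_cases hc : cut G (ω i ∩ ω (i + 1)) ≤ cut G (ω (i + 1))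
  · -- replace ω (i+1) by the intersection
    set X := ω i ∩ ω (i + 1) with hXdef
    set ω' : ℕ → Finset V := fun j => if j = i + 1 then X else ω j with hω'def
    have hne' : ∀ j ≠ i + 1, ω' j = ω j := by intro j hj; simp [hω'def, hj]
    have hXss : X ⊂ ω (i + 1) := by
      refine ⟨Finset.inter_subset_right, fun hsub => ?_⟩
      exact hx2 (Finset.mem_inter.mp (hsub hx1)).1
    have hcr' : IsCrusade A ∅ k ω' := by
      refine ⟨?_, ?_, ?_⟩
      · rw [hne' 0 (by omega)]; exact hcr.1
      · rw [hne' k (by omega)]; exact hcr.2.1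
      · intro j hj
        rcases eq_or_ne j i with rfl | hji
        · rw [hne' j (by omega)]
          have h1 : ω' (j + 1) = X := by simp [hω'def]
          rw [h1, hXdef, Finset.sdiff_inter_self_left]
          exact hcr.2.2 j hj
        · rcases eq_or_ne j (i + 1) with rfl | hji1
          · have h1 : ω' (i + 1) = X := by simp [hω'def]
            rw [h1, hne' (i + 1 + 1) (by omega)]
            calc (X \ ω (i + 1 + 1)).card ≤ (ω (i + 1) \ ω (i + 1 + 1)).card :=
                  Finset.card_le_card (Finset.sdiff_subset_sdiff hXss.subset le_rfl)
              _ ≤ 1 := hcr.2.2 (i + 1) hj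
          · rw [hne' j hji1, hne' (j + 1) (by omega)]
            exact hcr.2.2 j hj
    have hw' : width G k ω' ≤ γ := by
      refine Finset.sup_le fun j hj => ?_
      rw [Finset.mem_Icc] at hj
      rcases eq_or_ne j (i + 1) with rfl | hji
      · have h1 : ω' (i + 1) = X := by simp [hω'def]
        rw [h1]
        exact le_trans hc (hcuts (i + 1) (by omega) (by omega))
      · rw [hne' j hji]
        exact hcuts j hj.1 hj.2
    have hΦlt : Φ k ω' < Φ k ω := by
      refine Finset.sum_lt_sum (fun j hj => ?_) ⟨i + 1, Finset.mem_Icc.mpr ⟨by omega, by omega⟩, ?_⟩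
      · rcases eq_or_ne j (i + 1) with rfl | hji
        · have h1 : ω' (i + 1) = X := by simp [hω'def]
          rw [h1]
          have hcard : X.card ≤ (ω (i + 1)).card := Finset.card_le_card hXss.subset
          have hmul : (n + 1) * cut G X ≤ (n + 1) * cut G (ω (i + 1)) :=
            Nat.mul_le_mul_left _ hc
          omega
        · rw [hne' j hji]
      · have h1 : ω' (i + 1) = X := by simp [hω'def]
        rw [h1]
        have hcard : X.card < (ω (i + 1)).card := Finset.card_lt_card hXss
        have hmul : (n + 1) * cut G X ≤ (n + 1) * cut G (ω (i + 1)) :=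
          Nat.mul_le_mul_left _ hc
        omega
    have hle : sInf T ≤ Φ k ω' := Nat.sInf_le ⟨k, ω', hcr', hw', rfl⟩
    omega
  · -- replace ω i by the union
    push_neg at hc
    have hsubmod := cut_submod G (ω i) (ω (i + 1))
    set U := ω i ∪ ω (i + 1) with hUdef
    have hcU : cut G U < cut G (ω i) := by omega
    set ω' : ℕ → Finset V := fun j => if j = i then U else ω j with hω'def
    have hne' : ∀ j ≠ i, ω' j = ω j := by intro j hj; simp [hω'def, hj]
    have hcr' : IsCrusade A ∅ k ω' := by
      refine ⟨?_, ?_, ?_⟩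
      · rw [hne' 0 (by omega)]; exact hcr.1
      · rw [hne' k (by omega)]; exact hcr.2.1
      · intro j hj
        rcases eq_or_ne (j + 1) i with hji | hji
        · rw [hne' j (by omega)]
          have h1 : ω' (j + 1) = U := by simp [hω'def, hji]
          rw [h1]
          calc (ω j \ U).card ≤ (ω j \ ω i).card := by
                refine Finset.card_le_card (Finset.sdiff_subset_sdiff le_rfl ?_)
                rw [hUdef]
                exact Finset.subset_union_left
            _ = (ω j \ ω (j + 1)).card := by rw [hji]
            _ ≤ 1 := hcr.2.2 j hj
        · rcases eq_or_ne j i with rfl | hji2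
          · have h1 : ω' j = U := by simp [hω'def]
            rw [h1, hne' (j + 1) (by omega), hUdef, Finset.union_sdiff_right]
            exact hcr.2.2 j hj
          · rw [hne' j hji2, hne' (j + 1) hji]
            exact hcr.2.2 j hj
    have hw' : width G k ω' ≤ γ := by
      refine Finset.sup_le fun j hj => ?_
      rw [Finset.mem_Icc] at hj
      rcases eq_or_ne j i with rfl | hji
      · have h1 : ω' j = U := by simp [hω'def]
        rw [h1]
        exact le_trans (le_of_lt hcU) (hcuts j hj.1 hj.2)
      · rw [hne' j hji]
        exact hcuts j hj.1 hj.2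
    have hΦlt : Φ k ω' < Φ k ω := by
      refine Finset.sum_lt_sum (fun j hj => ?_) ⟨i, Finset.mem_Icc.mpr ⟨by omega, by omega⟩, ?_⟩
      · rcases eq_or_ne j i with rfl | hji
        · have h1 : ω' j = U := by simp [hω'def]
          rw [h1]
          have hcard : U.card ≤ n := Finset.card_le_univ U
          have hmul : (n + 1) * (cut G U + 1) ≤ (n + 1) * cut G (ω j) :=
            Nat.mul_le_mul_left _ hcU
          have hexp : (n + 1) * (cut G U + 1) = (n + 1) * cut G U + (n + 1) := by ring
          omega
        · rw [hne' j hji]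
      · have h1 : ω' i = U := by simp [hω'def]
        rw [h1]
        have hcard : U.card ≤ n := Finset.card_le_univ U
        have hmul : (n + 1) * (cut G U + 1) ≤ (n + 1) * cut G (ω i) :=
          Nat.mul_le_mul_left _ hcU
        have hexp : (n + 1) * (cut G U + 1) = (n + 1) * cut G U + (n + 1) := by ring
        omega
    have hle : sInf T ≤ Φ k ω' := Nat.sInf_le ⟨k, ω', hcr', hw', rfl⟩
    omega

theorem resilience_lower_bound (G : SimpleGraph V) [DecidableRel G.Adj]
    (hconn : G.Connected) (hΔ : 0 < G.maxDegree)
    (hW : G.maxDegree ≤ cutWidth G)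
    (A : Finset V) (hA : resilience G A < cutWidth G) :
    G.maxDegree * A.card + 2 * cutWidth G ≤
      resilience G A + (Fintype.card V + 2) * G.maxDegree := by
  classical
  have hne : Nonempty V := hconn.nonempty
  obtain ⟨k, ω, hcr, hw, htail⟩ := exists_tail_monotone G A
  have hsplit : (Fintype.card V + 2) * G.maxDegree =
      G.maxDegree * Fintype.card V + 2 * G.maxDegree := by ring
  rcases Nat.eq_zero_or_pos k with hk0 | hk1
  · have hA0 : A = ∅ := by
      have h1 := hcr.1
      have h2 := hcr.2.1
      rw [hk0] at h2
      rw [← h1, h2]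
    have hfin := final G ∅ (resilience G A) 0 (fun _ => ∅) rfl rfl
      (fun j hj => absurd hj (Nat.not_lt_zero j))
      (fun j hj => absurd hj (Nat.not_lt_zero j))
      (fun j _ => by rw [cut_empty]; exact Nat.zero_le _)
      hA hne
    simp only [Finset.card_empty, Nat.mul_zero, Nat.add_zero] at hfin
    have hAcard : G.maxDegree * A.card = 0 := by rw [hA0, Finset.card_empty, Nat.mul_zero]
    omega
  · have hfin := final G (ω 1) (resilience G A) (k - 1) (fun j => ω (j + 1))
      rfl
      (by show ω (k - 1 + 1) = ∅
          have hkk : k - 1 + 1 = k := by omega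
          rw [hkk]; exact hcr.2.1)
      (fun j hj => htail (j + 1) (by omega) (by omega))
      (fun j hj => hcr.2.2 (j + 1) (by omega))
      (fun j hj => le_trans
        (Finset.le_sup (f := fun i => cut G (ω i)) (Finset.mem_Icc.mpr ⟨by omega, by omega⟩))
        hw)
      hA hne
    have hAB : A.card ≤ (ω 1).card + 1 := by
      have hstep := hcr.2.2 0 hk1
      rw [hcr.1] at hstep
      simp only [Nat.zero_add] at hstep
      have h1 := Finset.card_inter_add_card_sdiff A (ω 1)
      have h2 : (A ∩ ω 1).card ≤ (ω 1).card :=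
        Finset.card_le_card Finset.inter_subset_right
      omega
    have hmul : G.maxDegree * A.card ≤ G.maxDegree * (ω 1).card + G.maxDegree := by
      calc G.maxDegree * A.card ≤ G.maxDegree * ((ω 1).card + 1) :=
            Nat.mul_le_mul_left _ hAB
        _ = G.maxDegree * (ω 1).card + G.maxDegree := by ring
    omega
end
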